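/- arXiv:0711.1487 — 4 statements merged into one kernel-verified Lean document; each statement's English description precedes it below -/
import Mathlib

section
/- Let $0 < a < b < c$ be positive integers and let $f = \gcd(a,b,c)$. For a complex number $z$, the $3\times 2$ matrix with rows $(a, z^a-1)$, $(b, z^b-1)$, $(c, z^c-1)$ has rank at most $1$ if and only if $z^f = 1$. -/
set_option maxHeartbeats 800000

open Real Set Module Matrix

set_option linter.unnecessarySeqFocus false in
lemma fourZeros (p q L : ℝ) (hL : L ≠ 0) {t0 t1 t2 t3 : ℝ}
    (h01 : t0 < t1) (h12 : t1 < t2) (h23 : t2 < t3)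
    (e0 : q * t0 ^ 2 + p * t0 + 1 = Real.exp (L * t0))
    (e1 : q * t1 ^ 2 + p * t1 + 1 = Real.exp (L * t1))
    (e2 : q * t2 ^ 2 + p * t2 + 1 = Real.exp (L * t2))
    (e3 : q * t3 ^ 2 + p * t3 + 1 = Real.exp (L * t3)) : False := by
  set h : ℝ → ℝ := fun t => q * t ^ 2 + p * t + 1 - Real.exp (L * t) with hh
  set g : ℝ → ℝ := fun t => 2 * q * t + p - L * Real.exp (L * t) with hg
  have hderiv : ∀ t : ℝ, HasDerivAt h (g t) t := by
    intro t
    have h1 : HasDerivAt (fun t : ℝ => L * t) L t := by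
      simpa using (hasDerivAt_id t).const_mul L
    have h2 : HasDerivAt (fun t : ℝ => Real.exp (L * t)) (Real.exp (L * t) * L) t := h1.exp
    have h3 : HasDerivAt (fun t : ℝ => q * t ^ 2 + p * t + 1) (2 * q * t + p) t := by
      have : HasDerivAt (fun x : ℝ => q * x ^ 2 + p * id x + 1)
          (q * ((2:ℕ) * t ^ (2-1)) + p * 1) t :=
        (((hasDerivAt_pow 2 t).const_mul q).add ((hasDerivAt_id t).const_mul p)).add_const 1
      convert this using 2 <;> simp <;> ring_nf
    have := h3.sub h2
    exact this.congr_deriv (by simp only [hg]; ring)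
  have hcont : ∀ s : Set ℝ, ContinuousOn h s := fun s =>
    (Continuous.sub (by continuity) (by continuity)).continuousOn
  have hz : ∀ t ∈ ({t0, t1, t2, t3} : Set ℝ), h t = 0 := by
    intro t ht
    rcases ht with rfl | rfl | rfl | rfl <;> simp [hh] <;> linarith
  have h0 : h t0 = 0 := hz t0 (by simp)
  have h1 : h t1 = 0 := hz t1 (by simp)
  have h2 : h t2 = 0 := hz t2 (by simp)
  have h3 : h t3 = 0 := hz t3 (by simp)
  obtain ⟨u1, hu1, hgu1⟩ := exists_hasDerivAt_eq_zero h01 (hcont _) (h0.trans h1.symm)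
    fun x _ => hderiv x
  obtain ⟨u2, hu2, hgu2⟩ := exists_hasDerivAt_eq_zero h12 (hcont _) (h1.trans h2.symm)
    fun x _ => hderiv x
  obtain ⟨u3, hu3, hgu3⟩ := exists_hasDerivAt_eq_zero h23 (hcont _) (h2.trans h3.symm)
    fun x _ => hderiv x
  set g' : ℝ → ℝ := fun t => 2 * q - L * (L * Real.exp (L * t)) with hg'
  have hderiv2 : ∀ t : ℝ, HasDerivAt g (g' t) t := by
    intro t
    have h1 : HasDerivAt (fun t : ℝ => L * t) L t := by
      simpa using (hasDerivAt_id t).const_mul L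
    have h2 : HasDerivAt (fun t : ℝ => Real.exp (L * t)) (Real.exp (L * t) * L) t := h1.exp
    have h4 : HasDerivAt (fun t : ℝ => 2 * q * t + p) (2 * q) t := by
      simpa using ((hasDerivAt_id t).const_mul (2 * q)).add_const p
    have := h4.sub (h2.const_mul L)
    exact this.congr_deriv (by simp only [hg']; ring)
  have hcont2 : ∀ s : Set ℝ, ContinuousOn g s := fun s =>
    (Continuous.sub (by continuity) (by continuity)).continuousOn
  have h12' : u1 < u2 := lt_trans hu1.2 hu2.1
  have h23' : u2 < u3 := lt_trans hu2.2 hu3.1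
  obtain ⟨v1, hv1, hgv1⟩ := exists_hasDerivAt_eq_zero h12' (hcont2 _) (hgu1.trans hgu2.symm)
    fun x _ => hderiv2 x
  obtain ⟨v2, hv2, hgv2⟩ := exists_hasDerivAt_eq_zero h23' (hcont2 _) (hgu2.trans hgu3.symm)
    fun x _ => hderiv2 x
  have hv12 : v1 < v2 := lt_trans hv1.2 hv2.1
  have hexp : Real.exp (L * v1) = Real.exp (L * v2) := by
    have hL2 : L * L ≠ 0 := mul_ne_zero hL hL
    simp only [hg'] at hgv1 hgv2
    have e1 : L * L * Real.exp (L * v1) = 2 * q := by linarith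
    have e2 : L * L * Real.exp (L * v2) = 2 * q := by linarith
    have := e1.trans e2.symm
    exact mul_left_cancel₀ hL2 this
  have := Real.exp_injective hexp
  have : v1 = v2 := by
    rcases mul_left_cancel₀ hL this with h
    exact h
  linarith

theorem stmt_0 (a b c : ℕ) (ha : 0 < a) (hab : a < b) (hbc : b < c)
    (f : ℕ) (hf : f = Nat.gcd a (Nat.gcd b c)) (z : ℂ) :
    (Matrix.of ![![(a : ℂ), z ^ a - 1], ![(b : ℂ), z ^ b - 1],
      ![(c : ℂ), z ^ c - 1]]).rank ≤ 1 ↔ z ^ f = 1 := by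
  subst hf
  set A : Matrix (Fin 3) (Fin 2) ℂ := Matrix.of ![![(a:ℂ), z^a-1], ![(b:ℂ), z^b-1],
      ![(c:ℂ), z^c-1]] with hA
  have hcol0 : Aᵀ 0 = ![(a:ℂ), (b:ℂ), (c:ℂ)] := by
    funext i; fin_cases i <;> simp [hA]
  have hcol1 : Aᵀ 1 = ![z^a-1, z^b-1, z^c-1] := by
    funext i; fin_cases i <;> simp [hA]
  have ha' : (a:ℂ) ≠ 0 := Nat.cast_ne_zero.mpr ha.ne'
  constructor
  · intro h
    rw [Matrix.rank_eq_finrank_span_cols] at h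
    obtain ⟨v, hv⟩ := finrank_le_one_iff.mp h
    obtain ⟨c0, hc0⟩ := hv ⟨Aᵀ 0, Submodule.subset_span ⟨0, rfl⟩⟩
    obtain ⟨c1, hc1⟩ := hv ⟨Aᵀ 1, Submodule.subset_span ⟨1, rfl⟩⟩
    have hc0' : c0 • (v : Fin 3 → ℂ) = Aᵀ 0 := congrArg Subtype.val hc0
    have hc1' : c1 • (v : Fin 3 → ℂ) = Aᵀ 1 := congrArg Subtype.val hc1
    have hc0ne : c0 ≠ 0 := by
      rintro rfl
      apply ha'
      have := congrFun hc0' 0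
      rw [hcol0] at this
      simpa using this.symm
    obtain ⟨lam, hlam⟩ : ∃ lam : ℂ, Aᵀ 1 = lam • Aᵀ 0 := by
      refine ⟨c1 / c0, ?_⟩
      rw [← hc0', ← hc1', smul_smul]
      congr 1
      field_simp
    have eqa : z ^ a = 1 + lam * a := by
      have := congrFun hlam 0; rw [hcol0, hcol1] at this; simp at this; linear_combination this
    have eqb : z ^ b = 1 + lam * b := by
      have := congrFun hlam 1; rw [hcol0, hcol1] at this; simp at this; linear_combination this
    have eqc : z ^ c = 1 + lam * c := by
      have := congrFun hlam 2; rw [hcol0, hcol1] at this; simp at this; linear_combination this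
    -- z ≠ 0
    have hz0 : z ≠ 0 := by
      rintro rfl
      rw [zero_pow ha.ne'] at eqa
      rw [zero_pow (by omega : b ≠ 0)] at eqb
      have hlamne : lam ≠ 0 := by
        intro h0; rw [h0] at eqa; simp at eqa
      have : (a : ℂ) = b := by
        apply mul_left_cancel₀ hlamne
        linear_combination eqb - eqa
      have : a = b := Nat.cast_injective this
      omega
    set s : ℝ := Complex.normSq z with hs
    have hspos : 0 < s := Complex.normSq_pos.mpr hz0
    set x : ℝ := lam.re
    set y : ℝ := lam.im
    have key : ∀ n : ℕ, z ^ n = 1 + lam * n →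
        (x^2 + y^2) * (n:ℝ) ^ 2 + (2*x) * (n:ℝ) + 1 = s ^ n := by
      intro n hn
      have h1 : Complex.normSq (z ^ n) = Complex.normSq (1 + lam * n) := by rw [hn]
      rw [map_pow] at h1
      rw [hs, h1]
      simp [Complex.normSq_apply, Complex.add_re, Complex.add_im, Complex.mul_re,
        Complex.mul_im]
      ring
    have ka := key a eqa
    have kb := key b eqb
    have kc := key c eqc
    have hs1 : s = 1 := by
      by_contra hne
      have hL : Real.log s ≠ 0 := Real.log_ne_zero_of_pos_of_ne_one hspos hne
      have hexp : ∀ n : ℕ, Real.exp (Real.log s * n) = s ^ n := by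
        intro n
        rw [mul_comm, Real.exp_nat_mul, Real.exp_log hspos]
      refine fourZeros (2*x) (x^2+y^2) (Real.log s) hL
        (show (0:ℝ) < a by exact_mod_cast ha)
        (show (a:ℝ) < b by exact_mod_cast hab)
        (show (b:ℝ) < c by exact_mod_cast hbc) ?_ ?_ ?_ ?_
      · simp
      · rw [hexp a]; exact ka
      · rw [hexp b]; exact kb
      · rw [hexp c]; exact kc
    rw [hs1] at ka kb
    rw [one_pow] at ka kb
    have hane : (0:ℝ) < a := by exact_mod_cast ha
    have hbne : (0:ℝ) < b := by exact_mod_cast lt_trans ha hab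
    have habR : (a:ℝ) ≠ b := by exact_mod_cast hab.ne
    have h1 : (x^2+y^2) * a + 2*x = 0 := by
      have h' : (a:ℝ) * ((x^2+y^2) * a + 2*x) = 0 := by linear_combination ka
      rcases mul_eq_zero.mp h' with h | h
      · exact absurd h hane.ne'
      · exact h
    have h2 : (x^2+y^2) * b + 2*x = 0 := by
      have h' : (b:ℝ) * ((x^2+y^2) * b + 2*x) = 0 := by linear_combination kb
      rcases mul_eq_zero.mp h' with h | h
      · exact absurd h hbne.ne'
      · exact h
    have hq : x^2 + y^2 = 0 := by
      have h3 : (x^2+y^2) * ((a:ℝ) - b) = 0 := by linarith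
      rcases mul_eq_zero.mp h3 with h | h
      · exact h
      · exact absurd (by linarith : (a:ℝ) = b) habR
    have hx : x = 0 := by nlinarith [sq_nonneg x, sq_nonneg y]
    have hy : y = 0 := by
      have hy2 : y ^ 2 = 0 := by nlinarith [sq_nonneg x]
      exact pow_eq_zero_iff two_ne_zero |>.mp hy2
    have hlam0 : lam = 0 := Complex.ext hx hy
    rw [hlam0] at eqa eqb eqc
    simp at eqa eqb eqc
    have hda : orderOf z ∣ a := orderOf_dvd_of_pow_eq_one eqa
    have hdb : orderOf z ∣ b := orderOf_dvd_of_pow_eq_one eqb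
    have hdc : orderOf z ∣ c := orderOf_dvd_of_pow_eq_one eqc
    exact orderOf_dvd_iff_pow_eq_one.mp (Nat.dvd_gcd hda (Nat.dvd_gcd hdb hdc))
  · intro h
    have hdvd : ∀ n : ℕ, Nat.gcd a (Nat.gcd b c) ∣ n → z ^ n = 1 := by
      rintro n ⟨k, rfl⟩
      rw [pow_mul, h, one_pow]
    have hza : z ^ a = 1 := hdvd a (Nat.gcd_dvd_left _ _)
    have hzb : z ^ b = 1 := hdvd b ((Nat.gcd_dvd_right a _).trans (Nat.gcd_dvd_left b c))
    have hzc : z ^ c = 1 := hdvd c ((Nat.gcd_dvd_right a _).trans (Nat.gcd_dvd_right b c))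
    have hc1 : Aᵀ 1 = 0 := by
      rw [hcol1, hza, hzb, hzc]
      funext i; fin_cases i <;> simp
    rw [Matrix.rank_eq_finrank_span_cols]
    have hle : Submodule.span ℂ (Set.range Aᵀ) ≤ Submodule.span ℂ {Aᵀ 0} := by
      rw [Submodule.span_le]
      rintro w ⟨i, rfl⟩
      fin_cases i
      · exact Submodule.mem_span_singleton_self _
      · show Aᵀ 1 ∈ _
        rw [hc1]; exact Submodule.zero_mem _
    have h0ne : Aᵀ 0 ≠ 0 := by
      rw [hcol0]
      intro hh
      exact ha' (by simpa using congrFun hh 0)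
    calc finrank ℂ ↥(Submodule.span ℂ (Set.range Aᵀ))
        ≤ finrank ℂ ↥(Submodule.span ℂ {Aᵀ 0}) := Submodule.finrank_mono hle
      _ = 1 := finrank_span_singleton h0ne
end

section
/- Let $0 < a < b < c$ be positive integers with $\gcd(a,b,c) = 1$. If $z$ is a complex number such that the vector $(z^a - 1, z^b - 1, z^c - 1)$ is a complex scalar multiple of $(a, b, c)$, then $z = 1$. -/
open Set

theorem stmt_1 (a b c : ℕ) (ha : 0 < a) (hab : a < b) (hbc : b < c)
    (hgcd : Nat.gcd a (Nat.gcd b c) = 1) (z : ℂ)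
    (h : ∃ t : ℂ, z ^ a - 1 = t * a ∧ z ^ b - 1 = t * b ∧ z ^ c - 1 = t * c) :
    z = 1 := by
  obtain ⟨t, h1, h2, h3⟩ := h
  -- z ≠ 0
  have hz : z ≠ 0 := by
    rintro rfl
    rw [zero_pow ha.ne'] at h1
    rw [zero_pow (by omega : b ≠ 0)] at h2
    have ht : t ≠ 0 := by rintro rfl; simp at h1
    have hcab : (a : ℂ) = b := mul_left_cancel₀ ht (h1.symm.trans h2)
    have : a = b := Nat.cast_injective hcab
    omega
  set r : ℝ := ‖z‖ with hrdef
  have hr : 0 < r := norm_pos_iff.mpr hz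
  set k : ℝ := 2 * Real.log r with hkdef
  set α : ℝ := t.re with hadef
  set β : ℝ := Complex.normSq t with hbdef
  -- key identity
  have key : ∀ n : ℕ, z ^ n - 1 = t * n →
      Real.exp (k * n) = 1 + 2 * α * n + β * n ^ 2 := by
    intro n hn
    have hzn : z ^ n = 1 + t * n := by linear_combination hn
    have e1 : Real.exp (k * n) = r ^ (2 * n) := by
      have := Real.exp_nat_mul (Real.log r) (2 * n)
      rw [Real.exp_log hr] at this
      rw [← this]
      push_cast
      rw [hkdef]
      ring_nf
    have e2 : r ^ (2 * n) = Complex.normSq (z ^ n) := by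
      rw [Complex.normSq_eq_norm_sq, norm_pow, ← hrdef, pow_mul]
      ring
    rw [e1, e2, hzn]
    simp only [Complex.normSq_apply, Complex.add_re, Complex.add_im, Complex.mul_re,
      Complex.mul_im, Complex.one_re, Complex.one_im, Complex.natCast_re, Complex.natCast_im,
      hadef, hbdef]
    ring
  set F : ℝ → ℝ := fun x => Real.exp (k * x) - (1 + 2 * α * x + β * x ^ 2) with hFdef
  set F' : ℝ → ℝ := fun x => k * Real.exp (k * x) - (2 * α + 2 * β * x) with hF'def
  have dF : ∀ x : ℝ, HasDerivAt F (F' x) x := by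
    intro x
    have e1 : HasDerivAt (fun y : ℝ => k * y) k x := by
      simpa using (hasDerivAt_id x).const_mul k
    have e2 : HasDerivAt (fun y : ℝ => Real.exp (k * y)) (Real.exp (k * x) * k) x :=
      (Real.hasDerivAt_exp (k * x)).comp x e1
    have p1 : HasDerivAt (fun y : ℝ => 2 * α * y) (2 * α) x := by
      simpa using (hasDerivAt_id x).const_mul (2 * α)
    have p2 : HasDerivAt (fun y : ℝ => β * y ^ 2) (β * (2 * x)) x := by
      simpa using (hasDerivAt_pow 2 x).const_mul β
    have e3 := (e2.sub (((p1.const_add 1).add p2)))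
    convert e3 using 1
    · rfl
    · rfl
    · rfl
    simp only [hF'def]
    ring
  have dF' : ∀ x : ℝ, HasDerivAt F' (k * k * Real.exp (k * x) - 2 * β) x := by
    intro x
    have e1 : HasDerivAt (fun y : ℝ => k * y) k x := by
      simpa using (hasDerivAt_id x).const_mul k
    have e2 : HasDerivAt (fun y : ℝ => Real.exp (k * y)) (Real.exp (k * x) * k) x :=
      (Real.hasDerivAt_exp (k * x)).comp x e1
    have e2' : HasDerivAt (fun y : ℝ => k * Real.exp (k * y)) (k * (Real.exp (k * x) * k)) x :=
      e2.const_mul k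
    have p1 : HasDerivAt (fun y : ℝ => 2 * β * y) (2 * β) x := by
      simpa using (hasDerivAt_id x).const_mul (2 * β)
    have e3 := e2'.sub (p1.const_add (2 * α))
    convert e3 using 1
    · rfl
    · rfl
    · rfl
    ring
  have contF : ContinuousOn F (univ : Set ℝ) :=
    (Differentiable.continuous (fun x => (dF x).differentiableAt)).continuousOn
  have contF' : ContinuousOn F' (univ : Set ℝ) :=
    (Differentiable.continuous (fun x => (dF' x).differentiableAt)).continuousOn
  have F0 : F 0 = 0 := by simp [hFdef]
  have Fn : ∀ n : ℕ, z ^ n - 1 = t * n → F n = 0 := by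
    intro n hn
    simp only [hFdef]
    rw [key n hn]
    ring
  have Fa := Fn a h1
  have Fb := Fn b h2
  have Fc := Fn c h3
  have h0a : (0 : ℝ) < a := by exact_mod_cast ha
  have hab' : (a : ℝ) < b := by exact_mod_cast hab
  have hbc' : (b : ℝ) < c := by exact_mod_cast hbc
  -- Rolle three times
  obtain ⟨y1, hy1, hy1'⟩ := exists_hasDerivAt_eq_zero h0a (contF.mono (subset_univ _))
    (F0.trans Fa.symm) (fun x _ => dF x)
  obtain ⟨y2, hy2, hy2'⟩ := exists_hasDerivAt_eq_zero hab' (contF.mono (subset_univ _))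
    (Fa.trans Fb.symm) (fun x _ => dF x)
  obtain ⟨y3, hy3, hy3'⟩ := exists_hasDerivAt_eq_zero hbc' (contF.mono (subset_univ _))
    (Fb.trans Fc.symm) (fun x _ => dF x)
  have hy12 : y1 < y2 := lt_trans hy1.2 hy2.1
  have hy23 : y2 < y3 := lt_trans hy2.2 hy3.1
  -- Rolle twice more
  obtain ⟨x1, hx1, hx1'⟩ := exists_hasDerivAt_eq_zero hy12 (contF'.mono (subset_univ _))
    (hy1'.trans hy2'.symm) (fun x _ => dF' x)
  obtain ⟨x2, hx2, hx2'⟩ := exists_hasDerivAt_eq_zero hy23 (contF'.mono (subset_univ _))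
    (hy2'.trans hy3'.symm) (fun x _ => dF' x)
  have hx12 : x1 < x2 := lt_trans hx1.2 hx2.1
  -- k = 0
  have hk : k = 0 := by
    by_contra hk
    have e12 : k * k * Real.exp (k * x1) = k * k * Real.exp (k * x2) := by
      linarith [hx1', hx2']
    have := Real.exp_injective (mul_left_cancel₀ (mul_ne_zero hk hk) e12)
    have : x1 = x2 := mul_left_cancel₀ hk this
    linarith
  have hβ : β = 0 := by
    rw [hk] at hx1'
    simp at hx1'
    linarith
  have ht : t = 0 := Complex.normSq_eq_zero.mp hβ
  subst ht
  have za : z ^ a = 1 := by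
    have : z ^ a - 1 = 0 := by rw [h1]; ring
    linear_combination this
  have zb : z ^ b = 1 := by
    have : z ^ b - 1 = 0 := by rw [h2]; ring
    linear_combination this
  have zc : z ^ c = 1 := by
    have : z ^ c - 1 = 0 := by rw [h3]; ring
    linear_combination this
  have hd : orderOf z ∣ 1 := by
    rw [← hgcd]
    exact Nat.dvd_gcd (orderOf_dvd_of_pow_eq_one za)
      (Nat.dvd_gcd (orderOf_dvd_of_pow_eq_one zb) (orderOf_dvd_of_pow_eq_one zc))
  exact orderOf_eq_one_iff.mp (Nat.dvd_one.mp hd)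
end

section
/- There exist no complex number $z$ with $|z| > 1$, complex numbers $\alpha, \beta$, and distinct positive integers $0 < a < b < c$ such that $z^m = \alpha m + \beta$ for all $m \in \{0, a, b, c\}$. -/
open Real Set

private lemma no_exp_quad {r A B a b c : ℝ} (hr : 1 < r)
    (h0 : 0 < a) (hab : a < b) (hbc : b < c)
    (Ha : r ^ a = A * a ^ 2 + B * a + 1)
    (Hb : r ^ b = A * b ^ 2 + B * b + 1)
    (Hc : r ^ c = A * c ^ 2 + B * c + 1) : False := by
  have hr0 : 0 < r := lt_trans one_pos hr
  set L := Real.log r with hL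
  have hLpos : 0 < L := Real.log_pos hr
  set F : ℝ → ℝ := fun t => r ^ t - (A * t ^ 2 + B * t + 1) with hF
  set G : ℝ → ℝ := fun t => r ^ t * L - (2 * A * t + B) with hG
  have hFd : ∀ t, HasDerivAt F (G t) t := by
    intro t
    have h1 : HasDerivAt (fun t : ℝ => r ^ t) (r ^ t * L) t :=
      (Real.hasStrictDerivAt_const_rpow hr0 t).hasDerivAt
    have h2 : HasDerivAt (fun t : ℝ => A * t ^ 2 + B * t + 1)
        (A * (2 * t ^ 1) + B * 1) t :=
      (((hasDerivAt_pow 2 t).const_mul A).add ((hasDerivAt_id t).const_mul B)).add_const 1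
    have := h1.sub h2
    exact this.congr_deriv (by simp only [hG]; ring)
  have hGd : ∀ t, HasDerivAt G (r ^ t * L * L - 2 * A) t := by
    intro t
    have h1 : HasDerivAt (fun t : ℝ => r ^ t * L) (r ^ t * L * L) t :=
      ((Real.hasStrictDerivAt_const_rpow hr0 t).hasDerivAt).mul_const L
    have h2 : HasDerivAt (fun t : ℝ => 2 * A * t + B) (2 * A) t := by
      simpa using ((hasDerivAt_id t).const_mul (2 * A)).add_const B
    exact h1.sub h2
  have hFc : Continuous F := by
    rw [continuous_iff_continuousAt]; exact fun t => (hFd t).continuousAt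
  have hGc : Continuous G := by
    rw [continuous_iff_continuousAt]; exact fun t => (hGd t).continuousAt
  have rolleF : ∀ x y, x < y → F x = F y → ∃ u ∈ Ioo x y, G u = 0 := by
    intro x y hxy hfe
    obtain ⟨u, hu, hdu⟩ := exists_deriv_eq_zero hxy hFc.continuousOn hfe
    exact ⟨u, hu, ((hFd u).deriv).symm.trans hdu⟩
  have rolleG : ∀ x y, x < y → G x = G y →
      ∃ u ∈ Ioo x y, r ^ u * L * L - 2 * A = 0 := by
    intro x y hxy hfe
    obtain ⟨u, hu, hdu⟩ := exists_deriv_eq_zero hxy hGc.continuousOn hfe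
    exact ⟨u, hu, ((hGd u).deriv).symm.trans hdu⟩
  have F0 : F 0 = 0 := by simp [hF, Real.rpow_zero]
  have Fa : F a = 0 := by simp [hF, Ha]
  have Fb : F b = 0 := by simp [hF, Hb]
  have Fc : F c = 0 := by simp [hF, Hc]
  obtain ⟨x1, hx1, hGx1⟩ := rolleF 0 a h0 (F0.trans Fa.symm)
  obtain ⟨x2, hx2, hGx2⟩ := rolleF a b hab (Fa.trans Fb.symm)
  obtain ⟨x3, hx3, hGx3⟩ := rolleF b c hbc (Fb.trans Fc.symm)
  have h12 : x1 < x2 := lt_trans hx1.2 hx2.1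
  have h23 : x2 < x3 := lt_trans hx2.2 hx3.1
  obtain ⟨y1, hy1, hy1e⟩ := rolleG x1 x2 h12 (hGx1.trans hGx2.symm)
  obtain ⟨y2, hy2, hy2e⟩ := rolleG x2 x3 h23 (hGx2.trans hGx3.symm)
  have hyy : y1 < y2 := lt_trans hy1.2 hy2.1
  have hlt : r ^ y1 < r ^ y2 := (Real.rpow_lt_rpow_left_iff hr).mpr hyy
  have h1 : r ^ y1 * L * L = 2 * A := by linarith
  have h2 : r ^ y2 * L * L = 2 * A := by linarith
  nlinarith [hlt, hLpos, mul_pos hLpos hLpos]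

theorem stmt_6 :
    ¬ ∃ (z : ℂ) (α β : ℂ) (a b c : ℕ), 1 < ‖z‖ ∧
      0 < a ∧ a < b ∧ b < c ∧
      (∀ m ∈ ({0, a, b, c} : Set ℕ), z ^ m = α * m + β) := by
  rintro ⟨z, α, β, a, b, c, hz, ha, hab, hbc, H⟩
  have hβ : β = 1 := by
    have h0 := H 0 (by simp)
    simpa using h0.symm
  subst hβ
  set r : ℝ := ‖z‖ ^ 2 with hrdef
  have hr : 1 < r := by
    have := one_lt_pow₀ hz (two_ne_zero)
    simpa [hrdef] using this
  set A : ℝ := α.re ^ 2 + α.im ^ 2 with hA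
  set B : ℝ := 2 * α.re with hB
  have key : ∀ m : ℕ, z ^ m = α * m + 1 →
      r ^ (m : ℝ) = A * (m : ℝ) ^ 2 + B * (m : ℝ) + 1 := by
    intro m hm
    have e1 : r ^ (m : ℝ) = Complex.normSq (z ^ m) := by
      rw [Real.rpow_natCast, hrdef, ← Complex.sq_norm, norm_pow]
      ring
    rw [e1, hm]
    have : ((m : ℕ) : ℂ) = ((m : ℝ) : ℂ) := by push_cast; ring
    rw [this]
    simp [Complex.normSq_apply, Complex.add_re, Complex.add_im, Complex.mul_re,
      Complex.mul_im, hA, hB]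
    ring
  have Ha := key a (H a (by simp))
  have Hb := key b (H b (by simp))
  have Hc := key c (H c (by simp))
  exact no_exp_quad hr (by exact_mod_cast ha) (by exact_mod_cast hab)
    (by exact_mod_cast hbc) Ha Hb Hc
end

section
/- Let $z$ be a complex number with $z \neq 1$, and let $0 < a < b < c$ be positive integers with $\gcd(a,b,c) = 1$. Then the point $(z^a, z^b, z^c) \in \mathbb{C}^3$ does not lie on the line $\{(1,1,1) + t(a,b,c) : t \in \mathbb{C}\}$ unless $z = 1$; i.e., if $(z^a, z^b, z^c) = (1 + ta, 1 + tb, 1 + tc)$ for some $t \in \mathbb{C}$, then $z = 1$ (and $t = 0$). -/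
open Real Set

private lemma rolle_step (f f' : ℝ → ℝ) (hd : ∀ s, HasDerivAt f (f' s) s)
    {u v : ℝ} (huv : u < v) (h : f u = f v) : ∃ w ∈ Set.Ioo u v, f' w = 0 :=
  exists_hasDerivAt_eq_zero huv
    (fun s _ => (hd s).continuousAt.continuousWithinAt) h (fun x _ => hd x)

private lemma no_four_zeros (μ β γ : ℝ) (hμ : μ ≠ 0) (x0 x1 x2 x3 : ℝ)
    (h01 : x0 < x1) (h12 : x1 < x2) (h23 : x2 < x3)
    (e0 : Real.exp (μ * x0) = γ * x0 ^ 2 + β * x0 + 1)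
    (e1 : Real.exp (μ * x1) = γ * x1 ^ 2 + β * x1 + 1)
    (e2 : Real.exp (μ * x2) = γ * x2 ^ 2 + β * x2 + 1)
    (e3 : Real.exp (μ * x3) = γ * x3 ^ 2 + β * x3 + 1) : False := by
  set f0 : ℝ → ℝ := fun s => Real.exp (μ * s) - (γ * s ^ 2 + β * s + 1) with hf0
  set f1 : ℝ → ℝ := fun s => μ * Real.exp (μ * s) - (2 * γ * s + β) with hf1
  set f2 : ℝ → ℝ := fun s => μ ^ 2 * Real.exp (μ * s) - 2 * γ with hf2
  have hexp : ∀ s : ℝ, HasDerivAt (fun s => Real.exp (μ * s)) (μ * Real.exp (μ * s)) s := by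
    intro s
    have h1 : HasDerivAt (fun s : ℝ => μ * s) μ s := by
      simpa using (hasDerivAt_id s).const_mul μ
    simpa [mul_comm] using h1.exp
  have hd0 : ∀ s, HasDerivAt f0 (f1 s) s := by
    intro s
    have hq : HasDerivAt (fun s : ℝ => γ * s ^ 2 + β * s + 1) (2 * γ * s + β) s := by
      have h1 : HasDerivAt (fun s : ℝ => s ^ 2) (2 * s) s := by
        simpa using hasDerivAt_pow 2 s
      have h2 := ((h1.const_mul γ).add ((hasDerivAt_id s).const_mul β)).add_const 1
      refine h2.congr_deriv ?_
      ring
    exact (hexp s).sub hq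
  have hd1 : ∀ s, HasDerivAt f1 (f2 s) s := by
    intro s
    have hq : HasDerivAt (fun s : ℝ => 2 * γ * s + β) (2 * γ) s := by
      simpa using ((hasDerivAt_id s).const_mul (2 * γ)).add_const β
    have h2 := ((hexp s).const_mul μ).sub hq
    refine h2.congr_deriv ?_
    simp [hf2]; ring
  have hd2 : ∀ s, HasDerivAt f2 (μ ^ 3 * Real.exp (μ * s)) s := by
    intro s
    have h2 := ((hexp s).const_mul (μ ^ 2)).sub_const (2 * γ)
    refine h2.congr_deriv ?_
    ring
  have z0 : f0 x0 = f0 x1 := by simp [hf0, e0, e1]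
  have z1 : f0 x1 = f0 x2 := by simp [hf0, e1, e2]
  have z2 : f0 x2 = f0 x3 := by simp [hf0, e2, e3]
  obtain ⟨s1, hs1, hfs1⟩ := rolle_step f0 f1 hd0 h01 z0
  obtain ⟨s2, hs2, hfs2⟩ := rolle_step f0 f1 hd0 h12 z1
  obtain ⟨s3, hs3, hfs3⟩ := rolle_step f0 f1 hd0 h23 z2
  have h12' : s1 < s2 := lt_trans hs1.2 hs2.1
  have h23' : s2 < s3 := lt_trans hs2.2 hs3.1
  obtain ⟨u1, hu1, hfu1⟩ := rolle_step f1 f2 hd1 h12' (hfs1.trans hfs2.symm)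
  obtain ⟨u2, hu2, hfu2⟩ := rolle_step f1 f2 hd1 h23' (hfs2.trans hfs3.symm)
  obtain ⟨v, _, hfv⟩ := rolle_step f2 _ hd2 (lt_trans hu1.2 hu2.1)
    (hfu1.trans hfu2.symm)
  have : μ ^ 3 ≠ 0 := pow_ne_zero 3 hμ
  exact (mul_ne_zero this (Real.exp_pos _).ne') hfv

private lemma key_eq (z t : ℂ) (n : ℕ) (h : z ^ n = 1 + t * n) :
    (Complex.normSq z) ^ n =
      Complex.normSq t * (n : ℝ) ^ 2 + (2 * t.re) * (n : ℝ) + 1 := by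
  have := congrArg Complex.normSq h
  rw [map_pow] at this
  rw [this]
  simp [Complex.normSq_apply, Complex.add_re, Complex.add_im, Complex.mul_re,
    Complex.mul_im]
  ring

theorem stmt_17 (z : ℂ) (a b c : ℕ) (ha : 0 < a) (hab : a < b) (hbc : b < c)
    (hgcd : Nat.gcd a (Nat.gcd b c) = 1) (t : ℂ)
    (h : z ^ a = 1 + t * a ∧ z ^ b = 1 + t * b ∧ z ^ c = 1 + t * c) :
    z = 1 ∧ t = 0 := by
  obtain ⟨h1, h2, h3⟩ := h
  -- z ≠ 0
  have hz0 : z ≠ 0 := by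
    intro hz
    rw [hz, zero_pow ha.ne'] at h1
    rw [hz, zero_pow (lt_trans ha hab).ne'] at h2
    have ht : t * a = t * b := by linear_combination h2 - h1
    have htne : t ≠ 0 := by
      intro h0
      rw [h0] at h1; simp at h1
    have : (a : ℂ) = b := mul_left_cancel₀ htne ht
    exact absurd (Nat.cast_injective this) hab.ne
  set R := Complex.normSq z with hR
  have hRpos : 0 < R := Complex.normSq_pos.mpr hz0
  set β := 2 * t.re with hβ
  set γ := Complex.normSq t with hγ
  have e1 := key_eq z t a h1
  have e2 := key_eq z t b h2
  have e3 := key_eq z t c h3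
  rw [← hR, ← hβ, ← hγ] at e1 e2 e3
  -- case R = 1 or not
  have hzone : z = 1 := by
    by_cases hR1 : R = 1
    · -- t = 0, then roots of unity, gcd
      rw [hR1, one_pow] at e1 e2
      have ha' : (0:ℝ) < a := Nat.cast_pos.mpr ha
      have hb' : (0:ℝ) < b := Nat.cast_pos.mpr (lt_trans ha hab)
      have hab' : (a:ℝ) ≠ b := by exact_mod_cast hab.ne
      have hγ0 : γ = 0 := by
        have key : γ * ((a:ℝ) - b) = 0 := by
          have d1 : γ * (a:ℝ) + β = 0 := by
            have h' : (a:ℝ) * (γ * a + β) = 0 := by nlinarith [e1]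
            rcases mul_eq_zero.mp h' with h | h
            · exact absurd h ha'.ne'
            · exact h
          have d2 : γ * (b:ℝ) + β = 0 := by
            have h' : (b:ℝ) * (γ * b + β) = 0 := by nlinarith [e2]
            rcases mul_eq_zero.mp h' with h | h
            · exact absurd h hb'.ne'
            · exact h
          linarith
        rcases mul_eq_zero.mp key with h | h
        · exact h
        · exact absurd (by linarith : (a:ℝ) = b) hab'
      have ht0 : t = 0 := Complex.normSq_eq_zero.mp hγ0
      rw [ht0] at h1 h2 h3
      simp at h1 h2 h3
      have o1 : orderOf z ∣ a := orderOf_dvd_of_pow_eq_one h1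
      have o2 : orderOf z ∣ b := orderOf_dvd_of_pow_eq_one h2
      have o3 : orderOf z ∣ c := orderOf_dvd_of_pow_eq_one h3
      have : orderOf z ∣ 1 := hgcd ▸ Nat.dvd_gcd o1 (Nat.dvd_gcd o2 o3)
      exact orderOf_eq_one_iff.mp (Nat.dvd_one.mp this)
    · -- exponential case: contradiction
      exfalso
      set μ := Real.log R with hμdef
      have hμ : μ ≠ 0 := by
        intro h0
        have : R = 1 := by
          have := Real.exp_log hRpos
          rw [← hμdef] at this  -- exp μ = R
          rw [h0, Real.exp_zero] at this
          exact this.symm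
        exact hR1 this
      have hexpR : ∀ n : ℕ, Real.exp (μ * n) = R ^ n := by
        intro n
        rw [mul_comm, Real.exp_nat_mul, Real.exp_log hRpos]
      refine no_four_zeros μ β γ hμ 0 a b c ?_ ?_ ?_ ?_ ?_ ?_ ?_
      · exact_mod_cast ha
      · exact_mod_cast hab
      · exact_mod_cast hbc
      · norm_num
      · rw [hexpR a]; linarith [e1]
      · rw [hexpR b]; linarith [e2]
      · rw [hexpR c]; linarith [e3]
  refine ⟨hzone, ?_⟩
  rw [hzone, one_pow] at h1
  have : t * a = 0 := by linear_combination -h1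
  rcases mul_eq_zero.mp this with h | h
  · exact h
  · exact absurd (Nat.cast_eq_zero.mp h) ha.ne'
end
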